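/- Suppose there exist S* ⊆ 𝓕 with |S*| ≤ k and σ* : 𝓓 → S* such that every client j ∈ 𝓓 is adjacent to σ*(j) and |σ*⁻¹(i)| ≥ L_i for all i ∈ S* (a feasible distance-1 assignment with no outliers). Let Γ ⊆ 𝓓 be maximal under inclusion among sets of clients with pairwise graph-distance at least 3, and for each j ∈ Γ choose i_j ∈ N(j) with L_{i_j} ≤ L_i for all i ∈ N(j); set F := {i_j : j ∈ Γ}. Then |Γ| ≤ k, and there exists σ : 𝓓 → F with dist(j, σ(j)) ≤ 3 for every j ∈ 𝓓 and |σ⁻¹(i)| ≥ L_i for every i ∈ F. -/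

import Mathlib

/-!
Two clients of `Γ` adjacent to a common facility are at distance at most 2, so any choice of a
neighbouring facility is injective on `Γ`; applied to `σ*` this gives `|Γ| ≤ |S*| ≤ k`.
Route each client `j` to a client `γ j ∈ Γ` at distance at most 2: to the unique `j₀ ∈ Γ` with
`σ* j₀ = σ* j` if there is one, otherwise to the nearby client given by the maximality of `Γ`.
Then `σ := isel ∘ γ` moves every client by at most 3, and the clients sent to `isel j₀` include
the whole fibre of `σ*` over `σ* j₀`, which has at least `L (σ* j₀) ≥ L (isel j₀)` elements.
-/

namespace SimpleGraph

variable {V : Type*} {G : SimpleGraph V}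

theorem edist_le_two_of_adj_of_adj {u v w : V} (huv : G.Adj u v) (hvw : G.Adj v w) :
    G.edist u w ≤ 2 :=
  calc G.edist u w ≤ G.edist u v + G.edist v w := G.edist_triangle
    _ = 2 := by rw [edist_eq_one_iff_adj.mpr huv, edist_eq_one_iff_adj.mpr hvw, one_add_one_eq_two]

theorem injOn_of_adj_of_three_le_edist {Γ : Set V}
    (hsep : ∀ j ∈ Γ, ∀ j' ∈ Γ, j ≠ j' → 3 ≤ G.edist j j')
    {f : V → V} (hf : ∀ j ∈ Γ, G.Adj j (f j)) : Set.InjOn f Γ := by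
  intro j hj j' hj' hfj
  by_contra hne
  have hle : G.edist j j' ≤ 2 :=
    edist_le_two_of_adj_of_adj (hf j hj) (hfj ▸ (hf j' hj').symm)
  exact absurd (hsep j hj j' hj' hne |>.trans hle) (by decide)

theorem card_le_of_adj_of_three_le_edist {Γ S : Finset V}
    (hsep : ∀ j ∈ Γ, ∀ j' ∈ Γ, j ≠ j' → 3 ≤ G.edist j j')
    {f : V → V} (hf : ∀ j ∈ Γ, f j ∈ S ∧ G.Adj j (f j)) : Γ.card ≤ S.card :=
  Finset.card_le_card_of_injOn f (fun j hj => (hf j hj).1)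
    (injOn_of_adj_of_three_le_edist hsep fun j hj => (hf j hj).2)

theorem exists_retraction_of_adj {D Γ : Finset V} (hΓ : Γ ⊆ D)
    (hsep : ∀ j ∈ Γ, ∀ j' ∈ Γ, j ≠ j' → 3 ≤ G.edist j j')
    (hmax : ∀ j ∈ D, j ∉ Γ → ∃ j' ∈ Γ, G.edist j j' < 3)
    {f : V → V} (hf : ∀ j ∈ D, G.Adj j (f j)) :
    ∃ γ : V → V, ∀ j ∈ D, γ j ∈ Γ ∧ G.edist j (γ j) ≤ 2 ∧
      ∀ j₀ ∈ Γ, f j = f j₀ → γ j = j₀ := by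
  have hinj : Set.InjOn f Γ :=
    injOn_of_adj_of_three_le_edist hsep fun j hj => hf j (hΓ hj)
  have hpoint : ∀ j ∈ D, ∃ c ∈ Γ, G.edist j c ≤ 2 ∧ ∀ j₀ ∈ Γ, f j = f j₀ → c = j₀ := by
    intro j hj
    by_cases hshare : ∃ c ∈ Γ, f j = f c
    · obtain ⟨c, hc, hfc⟩ := hshare
      refine ⟨c, hc, edist_le_two_of_adj_of_adj (hf j hj) (hfc ▸ (hf c (hΓ hc)).symm), ?_⟩
      exact fun j₀ hj₀ hfj₀ => hinj hc hj₀ (hfc ▸ hfj₀)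
    · have hjΓ : j ∉ Γ := fun hjΓ => hshare ⟨j, hjΓ, rfl⟩
      obtain ⟨c, hc, hlt⟩ := hmax j hj hjΓ
      refine ⟨c, hc, (ENat.lt_add_one_iff (by decide)).mp hlt, ?_⟩
      exact fun j₀ hj₀ hfj₀ => absurd ⟨j₀, hj₀, hfj₀⟩ hshare
  choose! γ hγΓ hγ using hpoint
  exact ⟨γ, fun j hj => ⟨hγΓ j hj, hγ j hj⟩⟩

end SimpleGraph

open SimpleGraph

theorem stmt_9 {V : Type*} [Fintype V] [DecidableEq V]
    (G : SimpleGraph V) [DecidableRel G.Adj]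
    (𝓓 : Finset V)
    (L : V → ℕ) (k : ℕ)
    (Sstar : Finset V) (σstar : V → V)
    (hScard : Sstar.card ≤ k)
    (hσadj : ∀ j ∈ 𝓓, σstar j ∈ Sstar ∧ G.Adj j (σstar j))
    (hσlb : ∀ i ∈ Sstar, L i ≤ (𝓓.filter fun j => σstar j = i).card)
    (Γ : Finset V) (hΓsub : Γ ⊆ 𝓓)
    (hΓsep : ∀ j ∈ Γ, ∀ j' ∈ Γ, j ≠ j' → 3 ≤ G.edist j j')
    (hΓmax : ∀ j ∈ 𝓓, j ∉ Γ → ∃ j' ∈ Γ, G.edist j j' < 3)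
    (isel : V → V)
    (hisel : ∀ j ∈ Γ, isel j ∈ G.neighborFinset j ∧
      ∀ i ∈ G.neighborFinset j, L (isel j) ≤ L i) :
    Γ.card ≤ k ∧
    ∃ σ : V → V,
      (∀ j ∈ 𝓓, σ j ∈ Γ.image isel ∧ G.edist j (σ j) ≤ 3) ∧
      (∀ i ∈ Γ.image isel, L i ≤ (𝓓.filter fun j => σ j = i).card) := by
  have hiselAdj : ∀ j ∈ Γ, G.Adj j (isel j) := fun j hj =>
    (mem_neighborFinset ..).mp (hisel j hj).1
  refine ⟨(card_le_of_adj_of_three_le_edist hΓsep fun j hj => hσadj j (hΓsub hj)).trans hScard,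
    ?_⟩
  obtain ⟨γ, hγ⟩ := exists_retraction_of_adj hΓsub hΓsep hΓmax fun j hj => (hσadj j hj).2
  refine ⟨isel ∘ γ, fun j hj => ⟨Finset.mem_image_of_mem isel (hγ j hj).1, ?_⟩, ?_⟩
  · calc G.edist j (isel (γ j)) ≤ G.edist j (γ j) + G.edist (γ j) (isel (γ j)) :=
          G.edist_triangle
      _ ≤ 2 + 1 := add_le_add (hγ j hj).2.1 (edist_eq_one_iff_adj.mpr (hiselAdj _ (hγ j hj).1)).le
      _ = 3 := by norm_num
  · rintro _ hi
    obtain ⟨j₀, hj₀, rfl⟩ := Finset.mem_image.mp hi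
    have hfibre :
        (𝓓.filter fun j => σstar j = σstar j₀) ⊆ 𝓓.filter fun j => isel (γ j) = isel j₀ :=
      Finset.monotone_filter_right _ fun j hj hσj => by rw [(hγ j hj).2.2 j₀ hj₀ hσj]
    calc L (isel j₀) ≤ L (σstar j₀) :=
          (hisel j₀ hj₀).2 _ ((mem_neighborFinset ..).mpr (hσadj j₀ (hΓsub hj₀)).2)
      _ ≤ _ := hσlb _ (hσadj j₀ (hΓsub hj₀)).1
      _ ≤ _ := Finset.card_le_card hfibre
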